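/- With the spectral setup above, let S^{α,ε}(t) v = Σ_k e^{(iελ_k/2 − α/ε)t} ⟨v,e_k⟩ e_k, and for a time step τ > 0 define the midpoint one-step operator S_τ^{α,ε} v = e^{−ατ/ε} Σ_k (1 + iετλ_k/4)(1 − iετλ_k/4)^{−1} ⟨v,e_k⟩ e_k. Then for every μ ∈ (0,6], k ∈ ℕ₊, and t_k = kτ, there is a constant C > 0 (independent of k, τ, ε, α, and the eigenvalues) such that the operator norm from (‖·‖_μ) to (‖·‖) satisfies ‖S^{α,ε}(t_k) − (S_τ^{α,ε})^k‖_{L(Ḣ^μ, L²)} ≤ C e^{−α t_k/ε} t_k^{μ/6} ε^{μ/2} τ^{μ/3}. -/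

import Mathlib

/-!
The midpoint factor is `e^{-ατ/ε}` times the Cayley transform `(1 + ia)/(1 - ia) = e^{2i arctan a}`
with `a = ετλ/4`, so after `k` steps both propagators multiply a mode by the same damping
`e^{-α t_k/ε}` and by unimodular factors with phases `2ka` and `2k arctan a`. Since
`|a - arctan a| ≤ a³/3` and `|e^{ix} - e^{iy}| ≤ 2|x - y|^{μ/6}` for `μ ≤ 6`, the error on a mode
is at most `2 e^{-α t_k/ε} t_k^{μ/6} ε^{μ/2} τ^{μ/3} λ^{μ/2}`; squaring and summing against the
coefficients gives the bound in terms of `‖v‖_μ`.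
-/

open Complex

lemma monotone_sub_arctan : Monotone fun x : ℝ => x - Real.arctan x := by
  refine monotone_of_hasDerivAt_nonneg (f' := fun x => x ^ 2 / (1 + x ^ 2))
    (fun x => ?_) fun x => by positivity
  refine ((hasDerivAt_id' x).sub (Real.hasDerivAt_arctan x)).congr_deriv ?_
  field_simp
  ring

lemma monotone_cube_div_three_sub_add_arctan :
    Monotone fun x : ℝ => x ^ 3 / 3 - x + Real.arctan x := by
  refine monotone_of_hasDerivAt_nonneg (f' := fun x => x ^ 4 / (1 + x ^ 2))
    (fun x => ?_) fun x => by positivity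
  refine ((((hasDerivAt_pow 3 x).div_const 3).sub (hasDerivAt_id' x)).add
    (Real.hasDerivAt_arctan x)).congr_deriv ?_
  field_simp
  ring

lemma abs_sub_arctan_le (x : ℝ) : |x - Real.arctan x| ≤ |x| ^ 3 / 3 := by
  wlog hx : 0 ≤ x generalizing x
  · simpa [Real.arctan_neg, abs_sub_comm, neg_add_eq_sub] using this (-x) (by linarith)
  have h0 := monotone_sub_arctan hx
  have h3 := monotone_cube_div_three_sub_add_arctan hx
  simp only [Real.arctan_zero] at h0 h3
  rw [abs_of_nonneg (by linarith), abs_of_nonneg hx]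
  linarith

lemma cayley_eq_exp_two_arctan (a : ℝ) :
    (1 + I * a) / (1 - I * a) = exp (I * (2 * Real.arctan a : ℝ)) := by
  have hden : 1 - (a : ℂ) * I ≠ 0 := fun h => by simpa using congrArg re h
  have hnum : 1 + (a : ℂ) * I ≠ 0 := fun h => by simpa using congrArg re h
  rw [ofReal_mul, ofReal_arctan, arctan, ofReal_ofNat,
    show I * (2 * (-I / 2 * log ((1 + a * I) / (1 - a * I)))) = log ((1 + a * I) / (1 - a * I)) by
      ring_nf; rw [I_sq]; ring,
    exp_log (div_ne_zero hnum hden), mul_comm I]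

lemma norm_exp_I_mul_sub_exp_I_mul_le_rpow {β : ℝ} (hβ0 : 0 ≤ β) (hβ1 : β ≤ 1) (x y : ℝ) :
    ‖exp (I * x) - exp (I * y)‖ ≤ 2 * |x - y| ^ β := by
  have hle_two : ‖exp (I * x) - exp (I * y)‖ ≤ 2 := by
    refine (norm_sub_le _ _).trans_eq ?_
    rw [mul_comm I, mul_comm I, norm_exp_ofReal_mul_I, norm_exp_ofReal_mul_I]
    norm_num
  have hle_abs : ‖exp (I * x) - exp (I * y)‖ ≤ |x - y| := by
    have : exp (I * x) - exp (I * y) = exp (I * y) * (exp (I * (x - y : ℝ)) - 1) := by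
      rw [mul_sub, mul_one, ← exp_add]; push_cast; ring_nf
    rw [this, norm_mul, mul_comm I, norm_exp_ofReal_mul_I, one_mul]
    exact Real.norm_exp_I_mul_ofReal_sub_one_le
  rcases le_total |x - y| 1 with h | h
  · have : |x - y| ≤ |x - y| ^ β := by
      simpa using Real.rpow_le_rpow_of_exponent_ge' (abs_nonneg _) h hβ0 hβ1
    linarith [Real.rpow_nonneg (abs_nonneg (x - y)) β]
  · linarith [Real.one_le_rpow h hβ0]

lemma exact_symbol_eq (k : ℕ) (τ ε α L : ℝ) :
    exp ((I * (ε * L) / 2 - (α : ℂ) / ε) * ((k : ℝ) * τ)) =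
      Real.exp (-α * (k * τ) / ε) * exp (I * (2 * k * (ε * τ * L / 4) : ℝ)) := by
  rw [ofReal_exp, ← exp_add]
  congr 1
  push_cast
  field_simp
  ring

lemma midpoint_symbol_pow_eq (k : ℕ) (τ ε α L : ℝ) :
    (exp (-(α : ℂ) * τ / ε) *
        ((1 + I * (ε * τ * L) / 4) / (1 - I * (ε * τ * L) / 4))) ^ k =
      Real.exp (-α * (k * τ) / ε) * exp (I * (2 * k * Real.arctan (ε * τ * L / 4) : ℝ)) := by
  have ha : I * (ε * τ * L) / 4 = I * (ε * τ * L / 4 : ℝ) := by push_cast; ring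
  rw [ha, cayley_eq_exp_two_arctan, ← exp_add, ← exp_nat_mul, ofReal_exp, ← exp_add]
  congr 1
  push_cast
  ring

lemma norm_exact_sub_midpoint_pow_le {μ : ℝ} (hμ0 : 0 ≤ μ) (hμ6 : μ ≤ 6) (k : ℕ) {τ ε : ℝ}
    (α : ℝ) {L : ℝ} (hτ : 0 ≤ τ) (hε : 0 < ε) (hL : 0 ≤ L) :
    ‖exp ((I * (ε * L) / 2 - (α : ℂ) / ε) * ((k : ℝ) * τ)) -
        (exp (-(α : ℂ) * τ / ε) *
          ((1 + I * (ε * τ * L) / 4) / (1 - I * (ε * τ * L) / 4))) ^ k‖ ≤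
      2 * Real.exp (-α * (k * τ) / ε) * (k * τ) ^ (μ / 6) * ε ^ (μ / 2) * τ ^ (μ / 3) *
        L ^ (μ / 2) := by
  rw [exact_symbol_eq, midpoint_symbol_pow_eq, ← mul_sub, norm_mul, norm_real, Real.norm_eq_abs,
    Real.abs_exp]
  set a := ε * τ * L / 4
  have ha : 0 ≤ a := by positivity
  have hk : (0 : ℝ) ≤ k := k.cast_nonneg
  have hphase : |2 * k * a - 2 * k * Real.arctan a| ≤ k * (ε * τ * L) ^ 3 := by
    have h := abs_sub_arctan_le a
    rw [abs_of_nonneg ha] at h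
    rw [← mul_sub, abs_mul, abs_of_nonneg (by positivity)]
    calc 2 * k * |a - Real.arctan a| ≤ 2 * k * (a ^ 3 / 3) := by gcongr
      _ ≤ k * (ε * τ * L) ^ 3 := by
        simp only [a]
        nlinarith [pow_nonneg (show 0 ≤ ε * τ * L by positivity) 3]
  have hscale : (k * (ε * τ * L) ^ 3) ^ (μ / 6) =
      (k * τ) ^ (μ / 6) * ε ^ (μ / 2) * τ ^ (μ / 3) * L ^ (μ / 2) := by
    rw [Real.mul_rpow hk (by positivity), ← Real.rpow_natCast_mul (by positivity),
      Real.mul_rpow (by positivity) hL, Real.mul_rpow hε.le hτ, Real.mul_rpow hk hτ,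
      show ((3 : ℕ) : ℝ) * (μ / 6) = μ / 6 + μ / 3 by push_cast; ring,
      Real.rpow_add_of_nonneg hτ (by positivity) (by positivity),
      show μ / 6 + μ / 3 = μ / 2 by ring]
    ring
  calc _ ≤ Real.exp (-α * (k * τ) / ε) * (2 * |2 * k * a - 2 * k * Real.arctan a| ^ (μ / 6)) := by
        gcongr
        exact norm_exp_I_mul_sub_exp_I_mul_le_rpow (by positivity) (by linarith) _ _
    _ ≤ Real.exp (-α * (k * τ) / ε) * (2 * (k * (ε * τ * L) ^ 3) ^ (μ / 6)) := by gcongr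
    _ = _ := by rw [hscale]; ring

lemma sqrt_tsum_norm_mul_sq_le {ι R : Type*} [NormedRing R] {f c : ι → R} {lam : ι → ℝ}
    {μ K : ℝ} (hK : 0 ≤ K) (hlam : ∀ m, 0 ≤ lam m) (hf : ∀ m, ‖f m‖ ≤ K * lam m ^ (μ / 2))
    (hc : Summable fun m => lam m ^ μ * ‖c m‖ ^ 2) :
    √(∑' m, ‖f m * c m‖ ^ 2) ≤ K * √(∑' m, lam m ^ μ * ‖c m‖ ^ 2) := by
  have hterm : ∀ m, ‖f m * c m‖ ^ 2 ≤ K ^ 2 * (lam m ^ μ * ‖c m‖ ^ 2) := fun m => by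
    have hsq : (lam m ^ (μ / 2)) ^ 2 = lam m ^ μ := by
      rw [← Real.rpow_mul_natCast (hlam m)]; norm_num
    calc ‖f m * c m‖ ^ 2 ≤ (K * lam m ^ (μ / 2) * ‖c m‖) ^ 2 := by
          gcongr
          exact (norm_mul_le _ _).trans (by gcongr; exact hf m)
      _ = K ^ 2 * (lam m ^ μ * ‖c m‖ ^ 2) := by rw [mul_pow, mul_pow, hsq]; ring
  have hsum : ∑' m, ‖f m * c m‖ ^ 2 ≤ K ^ 2 * ∑' m, lam m ^ μ * ‖c m‖ ^ 2 := by
    have hc' := Summable.mul_left (K ^ 2) hc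
    rw [← tsum_mul_left]
    exact (hc'.of_nonneg_of_le (fun m => by positivity) hterm).tsum_le_tsum hterm hc'
  calc _ ≤ √(K ^ 2 * ∑' m, lam m ^ μ * ‖c m‖ ^ 2) := Real.sqrt_le_sqrt hsum
    _ = _ := by rw [Real.sqrt_mul (by positivity), Real.sqrt_sq hK]

/-- Midpoint-scheme vs exact propagator estimate (Lemma 5.4): in spectral
coordinates `c m = ⟨v, e_m⟩`, the exact damped propagator over time `t_k = kτ`
multiplies the `m`-th mode by `e^{(iελ_m/2 - α/ε) t_k}` while `k` steps of the
midpoint scheme multiply it by `(e^{-ατ/ε}·(1+iετλ_m/4)/(1-iετλ_m/4))^k`.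
For every `μ ∈ (0,6]` there is a constant `C > 0`, independent of `k`, `τ`, `ε`,
`α` and the eigenvalues, with
`‖(S^{α,ε}(t_k) - (S_τ^{α,ε})^k) v‖ ≤ C e^{-α t_k/ε} t_k^{μ/6} ε^{μ/2} τ^{μ/3} ‖v‖_μ`. -/
theorem midpoint_propagator_error :
    ∃ C : ℝ, C > 0 ∧
      ∀ (μ : ℝ), 0 < μ → μ ≤ 6 →
      ∀ (k : ℕ), 1 ≤ k →
      ∀ (τ ε α : ℝ), 0 < τ → 0 < ε →
      ∀ (lam : ℕ → ℝ), (∀ m, 0 < lam m) → Monotone lam →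
      ∀ (c : ℕ → ℂ), (Summable fun m => lam m ^ μ * ‖c m‖ ^ 2) →
        Real.sqrt (∑' m,
            ‖(Complex.exp ((Complex.I * (ε * lam m) / 2 - (α : ℂ) / ε) * ((k : ℝ) * τ)) -
                (Complex.exp (-(α : ℂ) * τ / ε) *
                  ((1 + Complex.I * (ε * τ * lam m) / 4) /
                    (1 - Complex.I * (ε * τ * lam m) / 4))) ^ k) * c m‖ ^ 2) ≤
          C * Real.exp (-α * ((k : ℝ) * τ) / ε) * ((k : ℝ) * τ) ^ (μ / 6) *
            ε ^ (μ / 2) * τ ^ (μ / 3) *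
            Real.sqrt (∑' m, lam m ^ μ * ‖c m‖ ^ 2) := by
  refine ⟨2, two_pos, fun μ hμ0 hμ6 k _ τ ε α hτ hε lam hlam _ c hc => ?_⟩
  exact sqrt_tsum_norm_mul_sq_le (by positivity) (fun m => (hlam m).le)
    (fun m => norm_exact_sub_midpoint_pow_le hμ0.le hμ6 k α hτ.le hε (hlam m).le) hc
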